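/- Let A be a memory interval that is partitioned by a single branch B (disjoint from A) into two components, the left component U₀ (vertices to the left of B) and the right component U₁ (vertices to the right of B). Then every vertex of the right component U₁ precedes every vertex of the left component U₀ in vEB_ε(T). -/

import Mathlib

namespace VEB

inductive OTree : Type where
  | node : List OTree → OTree

def OTree.children : OTree → List OTree
  | .node cs => cs

mutual
  def height : OTree → ℕ
    | .node cs => 1 + heightList cs
  def heightList : List OTree → ℕ
    | [] => 0
    | c :: cs => max (height c) (heightList cs)
end

def subtreeAt? : OTree → List ℕ → Option OTree
  | t, [] => some t
  | t, i :: p =>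
    match t.children[i]? with
    | some c => subtreeAt? c p
    | none => none

/-- `p` is (the path of) a vertex of `t`. -/
def IsVertex (t : OTree) (p : List ℕ) : Prop := (subtreeAt? t p).isSome

/-- `p` is a leaf of `t`. -/
def IsLeaf (t : OTree) (p : List ℕ) : Prop := subtreeAt? t p = some (.node [])

/-- All leaves of `t` are at the same depth (the bottom level). -/
def Uniform (t : OTree) : Prop := ∀ p, IsLeaf t p → p.length + 1 = height t

/-- The top `m+1` levels of `t` (the truncation of height `m+1`). -/
def trunc : ℕ → OTree → OTree
  | 0, _ => .node []
  | m+1, t => .node (t.children.map (trunc m))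

/-- Paths of the vertices at depth `m`, in left-to-right order. -/
def levelPaths : ℕ → OTree → List (List ℕ)
  | 0, _ => [[]]
  | m+1, t => (t.children.zipIdx.map fun ic => (levelPaths m ic.1).map (ic.2 :: ·)).flatten

/-- The level at which a tree of height `h` is cut: `max ⌊ε h⌋ 1`. -/
noncomputable def cutLevel (ε : ℝ) (h : ℕ) : ℕ := max ⌊ε * (h : ℝ)⌋₊ 1

/-- The van Emde Boas order of the vertex paths of `t` (with recursion fuel). -/
noncomputable def vEBAux (ε : ℝ) : ℕ → OTree → List (List ℕ)
  | 0, _ => []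
  | fuel+1, t =>
    if height t ≤ 1 then [[]]
    else
      let m := cutLevel ε (height t)
      vEBAux ε fuel (trunc (m - 1) t) ++
        ((levelPaths m t).map fun q =>
          match subtreeAt? t q with
          | some s => (vEBAux ε fuel s).map (q ++ ·)
          | none => []).flatten

/-- The van Emde Boas order `vEB_ε(t)` of the vertex paths of `t`. -/
noncomputable def vEB (ε : ℝ) (t : OTree) : List (List ℕ) := vEBAux ε (height t) t

/-- Position (index) of vertex `p` in the van Emde Boas order. -/
noncomputable def pos (ε : ℝ) (t : OTree) (p : List ℕ) : ℕ := (vEB ε t).idxOf p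

/-- `A` is a set of vertices occupying consecutive positions in `vEB_ε(t)`. -/
def MemInterval (ε : ℝ) (t : OTree) (A : Set (List ℕ)) : Prop :=
  ∃ i n, A = {p | p ∈ ((vEB ε t).drop i).take n}

/-- The vertices of the decomposition `D` of `t`: pairs `(p, k)` of the root path
and the height of a decomposition subtree (with recursion fuel). -/
noncomputable def decompAux (ε : ℝ) : ℕ → OTree → List (List ℕ × ℕ)
  | 0, _ => []
  | fuel+1, t =>
    if height t ≤ 1 then [([], 1)]
    else
      let m := cutLevel ε (height t)
      ([], height t) ::
        (decompAux ε fuel (trunc (m - 1) t) ++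
          ((levelPaths m t).map fun q =>
            match subtreeAt? t q with
            | some s => (decompAux ε fuel s).map fun r => (q ++ r.1, r.2)
            | none => []).flatten)

/-- The vertices of the decomposition `D` of `t`. -/
noncomputable def decompVerts (ε : ℝ) (t : OTree) : List (List ℕ × ℕ) :=
  decompAux ε (height t) t

/-- The children in the decomposition tree `D` of the decomposition vertex `(p, k)`:
the top tree followed by the bottom trees in left-to-right order. -/
noncomputable def dChildren (ε : ℝ) (t : OTree) (p : List ℕ) (k : ℕ) : List (List ℕ × ℕ) :=
  if k ≤ 1 then []
  else
    match subtreeAt? t p with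
    | some s =>
      (p, cutLevel ε k) ::
        (levelPaths (cutLevel ε k) s).map fun q => (p ++ q, k - cutLevel ε k)
    | none => []

/-- The decomposition subtree `(p, k)` contains the vertex `w` of `t`;
equivalently, the leaf `{w}` of `D` lies in the subtree of `D` rooted at `(p, k)`. -/
def DContains (p : List ℕ) (k : ℕ) (w : List ℕ) : Prop :=
  p <+: w ∧ w.length < p.length + k

/-- Vertex `v` is to the left of the branch with leaf `ℓ`. -/
def LeftOfBranch (v ℓ : List ℕ) : Prop := List.Lex (· < ·) v (ℓ.take v.length)

/-- Vertex `v` is to the right of the branch with leaf `ℓ`. -/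
def RightOfBranch (v ℓ : List ℕ) : Prop := List.Lex (· < ·) (ℓ.take v.length) v

/-- Every internal vertex of `t` has at least `a` children. -/
def MinArity (t : OTree) (a : ℕ) : Prop :=
  ∀ p s, subtreeAt? t p = some s → s.children ≠ [] → a ≤ s.children.length

/-- Every internal vertex of `t` has at most `b` children. -/
def MaxArity (t : OTree) (b : ℕ) : Prop :=
  ∀ p s, subtreeAt? t p = some s → s.children.length ≤ b

/-- `w` lies on the leftmost branch descending from `v` (always taking the leftmost child). -/
def OnLeftmostBranch (v w : List ℕ) : Prop :=
  v <+: w ∧ ∀ n (hn : n < w.length), v.length ≤ n → w.get ⟨n, hn⟩ = 0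

/-- `w` lies on the rightmost branch descending from `v` (always taking the rightmost child). -/
def OnRightmostBranch (t : OTree) (v w : List ℕ) : Prop :=
  v <+: w ∧ ∀ n (hn : n < w.length), v.length ≤ n →
    ∀ s, subtreeAt? t (w.take n) = some s → w.get ⟨n, hn⟩ + 1 = s.children.length

/-!
In `vEB_ε(T)` the top tree comes first, the bottom trees follow in left-to-right order, and the
order of every tree starts with its root. So if `B` is cut at depth `m`, the bottom tree rooted at
the vertex of `B` of depth `m` starts with a vertex of `B`, the bottom trees before it lie left of
`B` and those after it lie right of `B`. Induction along the recursion shows that in `vEB_ε(T)`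
every vertex left of `B` is followed by a vertex of `B`, and that a vertex of `B` lies between any
vertex left of `B` and any later vertex right of `B`. A memory interval avoiding `B` therefore
cannot hold a left vertex before a right one.
-/

open scoped List

section Lists

variable {α : Type*}

theorem _root_.List.idxOf_lt_idxOf_of_pair_sublist [BEq α] [LawfulBEq α] {a b : α} {L : List α}
    (hL : L.Nodup) (h : [a, b] <+ L) : L.idxOf a < L.idxOf b := by
  induction L with
  | nil => simp at h
  | cons c L ih =>
    obtain ⟨hc, hL⟩ := List.nodup_cons.1 hL
    cases h with
    | cons _ h =>
      have hca : c ≠ a := fun e => hc (e ▸ h.subset (by simp))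
      have hcb : c ≠ b := fun e => hc (e ▸ h.subset (by simp))
      simp [hca, hcb, ih hL h]
    | cons_cons _ h =>
      have hab : a ≠ b := fun e => hc (e ▸ h.subset (by simp))
      simp [hab]

theorem _root_.List.pair_sublist_or_pair_sublist {a b : α} {L : List α} (ha : a ∈ L) (hb : b ∈ L)
    (hab : a ≠ b) : [a, b] <+ L ∨ [b, a] <+ L := by
  induction L with
  | nil => cases ha
  | cons c L ih =>
    rcases List.mem_cons.1 ha with rfl | ha'
    · exact Or.inl (List.cons_sublist_cons.2 (List.singleton_sublist.2
        ((List.mem_cons.1 hb).resolve_left (Ne.symm hab))))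
    rcases List.mem_cons.1 hb with rfl | hb'
    · exact Or.inr (List.cons_sublist_cons.2 (List.singleton_sublist.2 ha'))
    exact (ih ha' hb').imp (·.cons c) (·.cons c)

theorem _root_.List.cons_sublist_of_cons_sublist_append {x : α} {l P M : List α} (hx : x ∉ P)
    (h : x :: l <+ P ++ M) : x :: l <+ M := by
  induction P with
  | nil => exact h
  | cons p P ih =>
    rw [List.mem_cons, not_or] at hx
    exact ih hx.2 (h.of_cons_of_ne hx.1)

theorem _root_.List.Nodup.mem_of_sublist_of_isInfix {a b c : α} {L I : List α} (hL : L.Nodup)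
    (hI : I <:+: L) (ha : a ∈ I) (hc : c ∈ I) (h : [a, b, c] <+ L) : b ∈ I := by
  obtain ⟨P, S, rfl⟩ := hI
  have haP : a ∉ P := fun haP =>
    List.disjoint_of_nodup_append (List.nodup_append.1 hL).1 haP ha
  have hcS : c ∉ S := fun hcS =>
    List.disjoint_of_nodup_append hL (List.mem_append_right P hc) hcS
  have hPI : [a, b, c] <+ P ++ I := by
    have h' : [c, b, a] <+ S.reverse ++ (P ++ I).reverse := by simpa using h.reverse
    simpa using (List.cons_sublist_of_cons_sublist_append (by simpa using hcS) h').reverse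
  exact (List.cons_sublist_of_cons_sublist_append haP hPI).subset (by simp)

theorem _root_.List.append_lt_append_of_length_eq [LT α] {a b : List α}
    (hlen : a.length = b.length) (h : a < b) (c d : List α) : a ++ c < b ++ d := by
  induction a generalizing b with
  | nil => cases b <;> simp_all
  | cons x a ih =>
    rcases b with _ | ⟨y, b⟩
    · simp at hlen
    · rcases List.cons_lt_cons_iff.1 h with hxy | ⟨rfl, hab⟩
      · exact List.Lex.rel hxy
      · exact List.Lex.cons (ih (by simpa using hlen) hab)

theorem _root_.List.append_lt_append_left_iff [LT α] [Std.Irrefl (α := α) (· < ·)]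
    {p a b : List α} : p ++ a < p ++ b ↔ a < b := by
  induction p <;> simp_all

end Lists

section Separation

variable {α β : Type*} (mid left right : α → Prop)

def Separates (L : List α) : Prop :=
  ∀ x y, [x, y] <+ L → left x → right y → ∃ z, mid z ∧ [x, z, y] <+ L

def FollowedBy (L : List α) : Prop :=
  ∀ x ∈ L, left x → ∃ z, mid z ∧ [x, z] <+ L

variable {mid left right}

theorem separates_of_forall_not_left {L : List α} (h : ∀ x ∈ L, ¬ left x) :
    Separates mid left right L :=
  fun x _ hxy hx _ => absurd hx (h x (hxy.subset (by simp)))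

theorem separates_of_forall_not_right {L : List α} (h : ∀ y ∈ L, ¬ right y) :
    Separates mid left right L :=
  fun _ y hxy _ hy => absurd hy (h y (hxy.subset (by simp)))

theorem followedBy_of_forall_not_left {L : List α} (h : ∀ x ∈ L, ¬ left x) :
    FollowedBy mid left L :=
  fun x hx hl => absurd hl (h x hx)

theorem Separates.append {A B : List α} (hA : Separates mid left right A)
    (hB : Separates mid left right B)
    (hAB : ∀ x ∈ A, ∀ y ∈ B, left x → right y → ∃ z, mid z ∧ [x, z, y] <+ A ++ B) :
    Separates mid left right (A ++ B) := by
  intro x y hxy hx hy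
  obtain ⟨l₁, l₂, hl, h₁, h₂⟩ := List.sublist_append_iff.1 hxy
  rcases l₁ with _ | ⟨a, _ | ⟨b, _ | ⟨c, l₁⟩⟩⟩
  · obtain ⟨z, hz, hxzy⟩ := hB x y (by simpa [hl] using h₂) hx hy
    exact ⟨z, hz, hxzy.trans (List.sublist_append_right A B)⟩
  · obtain ⟨rfl, rfl⟩ : x = a ∧ l₂ = [y] := by simpa [eq_comm] using hl
    exact hAB x (h₁.subset (by simp)) y (h₂.subset (by simp)) hx hy
  · obtain ⟨rfl, rfl, rfl⟩ : x = a ∧ y = b ∧ l₂ = [] := by simpa [eq_comm] using hl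
    obtain ⟨z, hz, hxzy⟩ := hA x y h₁ hx hy
    exact ⟨z, hz, hxzy.trans (List.sublist_append_left A B)⟩
  · simp at hl

theorem FollowedBy.cross {A : List α} (hA : FollowedBy mid left A) (B : List α) :
    ∀ x ∈ A, ∀ y ∈ B, left x → right y → ∃ z, mid z ∧ [x, z, y] <+ A ++ B := by
  intro x hx y hy hl _
  obtain ⟨z, hz, hxz⟩ := hA x hx hl
  exact ⟨z, hz, List.Sublist.append hxz (List.singleton_sublist.2 hy)⟩

theorem cross_of_head {z₀ : α} (hz₀ : mid z₀) (hz₀r : ¬ right z₀) (A B : List α) :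
    ∀ x ∈ A, ∀ y ∈ z₀ :: B, left x → right y → ∃ z, mid z ∧ [x, z, y] <+ A ++ z₀ :: B := by
  intro x hx y hy _ hr
  have hyB : y ∈ B := (List.mem_cons.1 hy).resolve_left (by rintro rfl; exact hz₀r hr)
  exact ⟨z₀, hz₀, List.Sublist.append (List.singleton_sublist.2 hx)
    (List.cons_sublist_cons.2 (List.singleton_sublist.2 hyB))⟩

theorem FollowedBy.append {A B : List α} (hA : FollowedBy mid left A)
    (hB : FollowedBy mid left B) : FollowedBy mid left (A ++ B) := by
  intro x hx hl
  rcases List.mem_append.1 hx with hx | hx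
  · obtain ⟨z, hz, hxz⟩ := hA x hx hl
    exact ⟨z, hz, hxz.trans (List.sublist_append_left A B)⟩
  · obtain ⟨z, hz, hxz⟩ := hB x hx hl
    exact ⟨z, hz, hxz.trans (List.sublist_append_right A B)⟩

theorem followedBy_append_of_mem {A B : List α} {z : α} (hzB : z ∈ B) (hz : mid z)
    (hB : FollowedBy mid left B) : FollowedBy mid left (A ++ B) := by
  intro x hx hl
  rcases List.mem_append.1 hx with hx | hx
  · exact ⟨z, hz, List.Sublist.append (List.singleton_sublist.2 hx) (List.singleton_sublist.2 hzB)⟩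
  · obtain ⟨z, hz, hxz⟩ := hB x hx hl
    exact ⟨z, hz, hxz.trans (List.sublist_append_right A B)⟩

theorem Separates.map {mid' left' right' : β → Prop} {f : β → α} {L : List β}
    (h : Separates mid' left' right' L) (hl : ∀ x ∈ L, left (f x) → left' x)
    (hr : ∀ y ∈ L, right (f y) → right' y) (hm : ∀ z ∈ L, mid' z → mid (f z)) :
    Separates mid left right (L.map f) := by
  intro x y hxy hx hy
  obtain ⟨l, hl', hxyl⟩ := List.sublist_map_iff.1 hxy
  rcases l with _ | ⟨x', _ | ⟨y', _ | _⟩⟩ <;> simp only [List.map_cons, List.map_nil,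
    List.cons.injEq, reduceCtorEq, and_false] at hxyl
  obtain ⟨rfl, rfl, -⟩ := hxyl
  have hx' := hl'.subset (by simp : x' ∈ [x', y'])
  have hy' := hl'.subset (by simp : y' ∈ [x', y'])
  obtain ⟨z, hz, hxzy⟩ := h x' y' hl' (hl x' hx' hx) (hr y' hy' hy)
  exact ⟨f z, hm z (hxzy.subset (by simp)) hz, by simpa using hxzy.map f⟩

theorem FollowedBy.map {mid' left' : β → Prop} {f : β → α} {L : List β}
    (h : FollowedBy mid' left' L) (hl : ∀ x ∈ L, left (f x) → left' x)
    (hm : ∀ z ∈ L, mid' z → mid (f z)) : FollowedBy mid left (L.map f) := by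
  intro x hx hlx
  obtain ⟨x', hx', rfl⟩ := List.mem_map.1 hx
  obtain ⟨z, hz, hxz⟩ := h x' hx' (hl x' hx' hlx)
  exact ⟨f z, hm z (hxz.subset (by simp)) hz, by simpa using hxz.map f⟩

/-- The shape of `vEB_ε(T)` cut below level `m`: `T` is the top tree, `F` the bottom trees left of
the branch, `z :: Q` the bottom tree rooted on the branch and `G` the bottom trees right of it. -/
theorem separates_of_decomposition {T F Q G : List α} {z : α}
    (hT : Separates mid left right T) (hTf : FollowedBy mid left T)
    (hF : ∀ x ∈ F, ¬ right x)
    (hQ : Separates mid left right (z :: Q)) (hQf : FollowedBy mid left (z :: Q))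
    (hz : mid z) (hzr : ¬ right z) (hG : ∀ x ∈ G, ¬ left x) :
    Separates mid left right (T ++ (F ++ (z :: Q ++ G))) ∧
      FollowedBy mid left (T ++ (F ++ (z :: Q ++ G))) := by
  have hQG : Separates mid left right (z :: Q ++ G) :=
    hQ.append (separates_of_forall_not_left hG) (hQf.cross G)
  have hQGf : FollowedBy mid left (z :: Q ++ G) := hQf.append (followedBy_of_forall_not_left hG)
  have hFQG : Separates mid left right (F ++ (z :: Q ++ G)) :=
    (separates_of_forall_not_right hF).append hQG (cross_of_head hz hzr F (Q ++ G))
  have hFQGf : FollowedBy mid left (F ++ (z :: Q ++ G)) :=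
    followedBy_append_of_mem (List.mem_cons_self ..) hz hQGf
  exact ⟨hT.append hFQG (hTf.cross _), hTf.append hFQGf⟩

end Separation

section Branch

theorem not_leftOfBranch_of_prefix {v ℓ : List ℕ} (h : v <+: ℓ) : ¬ LeftOfBranch v ℓ := by
  rw [LeftOfBranch, ← List.prefix_iff_eq_take.1 h]
  exact List.lt_irrefl v

theorem not_rightOfBranch_of_prefix {v ℓ : List ℕ} (h : v <+: ℓ) : ¬ RightOfBranch v ℓ := by
  rw [RightOfBranch, ← List.prefix_iff_eq_take.1 h]
  exact List.lt_irrefl v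

theorem LeftOfBranch.not_right {v ℓ : List ℕ} (h : LeftOfBranch v ℓ) : ¬ RightOfBranch v ℓ :=
  List.lt_asymm h

theorem leftOfBranch_append_of_lt {p q ℓ : List ℕ} (hlen : q.length = p.length) (h : q < p)
    (r : List ℕ) : LeftOfBranch (q ++ r) (p ++ ℓ) := by
  rw [LeftOfBranch, List.length_append, hlen, List.take_length_add_append]
  exact List.append_lt_append_of_length_eq hlen h _ _

theorem rightOfBranch_append_of_lt {p q ℓ : List ℕ} (hlen : q.length = p.length) (h : p < q)
    (r : List ℕ) : RightOfBranch (q ++ r) (p ++ ℓ) := by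
  rw [RightOfBranch, List.length_append, hlen, List.take_length_add_append]
  exact List.append_lt_append_of_length_eq hlen.symm h _ _

theorem leftOfBranch_append_iff {p x ℓ : List ℕ} :
    LeftOfBranch (p ++ x) (p ++ ℓ) ↔ LeftOfBranch x ℓ := by
  rw [LeftOfBranch, LeftOfBranch, List.length_append, List.take_length_add_append]
  exact List.append_lt_append_left_iff

theorem rightOfBranch_append_iff {p x ℓ : List ℕ} :
    RightOfBranch (p ++ x) (p ++ ℓ) ↔ RightOfBranch x ℓ := by
  rw [RightOfBranch, RightOfBranch, List.length_append, List.take_length_add_append]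
  exact List.append_lt_append_left_iff

theorem leftOfBranch_take_iff {x ℓ : List ℕ} {k : ℕ} (hk : x.length ≤ k) :
    LeftOfBranch x (ℓ.take k) ↔ LeftOfBranch x ℓ := by
  rw [LeftOfBranch, LeftOfBranch, List.take_take, min_eq_left hk]

theorem rightOfBranch_take_iff {x ℓ : List ℕ} {k : ℕ} (hk : x.length ≤ k) :
    RightOfBranch x (ℓ.take k) ↔ RightOfBranch x ℓ := by
  rw [RightOfBranch, RightOfBranch, List.take_take, min_eq_left hk]

end Branch

section Tree

theorem height_pos (t : OTree) : 0 < height t := by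
  cases t with | node cs => rw [height]; omega

theorem height_le_heightList {c : OTree} {cs : List OTree} (h : c ∈ cs) :
    height c ≤ heightList cs := by
  induction cs with
  | nil => cases h
  | cons d ds ih =>
    rw [heightList]
    rcases List.mem_cons.1 h with rfl | h
    · exact le_max_left _ _
    · exact (ih h).trans (le_max_right _ _)

theorem subtreeAt?_append (t : OTree) (p q : List ℕ) :
    subtreeAt? t (p ++ q) = (subtreeAt? t p).bind (subtreeAt? · q) := by
  induction p generalizing t with
  | nil => rfl
  | cons i p ih =>
    simp only [List.cons_append, subtreeAt?]
    cases t.children[i]? <;> simp [ih]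

theorem height_add_length_le {t s : OTree} {p : List ℕ} (h : subtreeAt? t p = some s) :
    height s + p.length ≤ height t := by
  induction p generalizing t with
  | nil => cases h; simp
  | cons i p ih =>
    obtain ⟨cs⟩ := t
    rw [subtreeAt?] at h
    cases hc : cs[i]? with
    | none => simp [OTree.children, hc] at h
    | some c =>
      simp only [OTree.children, hc] at h
      have := height_le_heightList (List.mem_of_getElem? hc)
      have := ih h
      rw [height, List.length_cons]
      omega

theorem IsVertex.length_lt_height {t : OTree} {p : List ℕ} (h : IsVertex t p) :
    p.length < height t := by
  obtain ⟨s, hs⟩ := Option.isSome_iff_exists.1 h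
  have := height_add_length_le hs
  have := height_pos s
  omega

theorem IsVertex.of_prefix {t : OTree} {p q : List ℕ} (h : IsVertex t q) (hpq : p <+: q) :
    IsVertex t p := by
  obtain ⟨r, rfl⟩ := hpq
  unfold IsVertex at h ⊢
  rw [subtreeAt?_append] at h
  cases hp : subtreeAt? t p <;> simp_all

theorem height_trunc (n : ℕ) (t : OTree) : height (trunc n t) = min (n + 1) (height t) := by
  induction n generalizing t with
  | zero =>
    have := height_pos t
    simp [trunc, height, heightList]
    omega
  | succ n ih =>
    obtain ⟨cs⟩ := t
    suffices heightList (cs.map (trunc n)) = min (n + 1) (heightList cs) by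
      simp only [trunc, height, OTree.children, this]
      omega
    induction cs with
    | nil => simp [heightList]
    | cons c cs ih' =>
      simp only [List.map_cons, heightList, ih', ih c]
      omega

theorem IsVertex.trunc {t : OTree} {p : List ℕ} {n : ℕ} (h : IsVertex t p) (hp : p.length ≤ n) :
    IsVertex (trunc n t) p := by
  induction p generalizing n t with
  | nil => rfl
  | cons i p ih =>
    obtain ⟨cs⟩ := t
    obtain ⟨n, rfl⟩ : ∃ n', n = n' + 1 := ⟨n - 1, by simp at hp; omega⟩
    unfold IsVertex subtreeAt? at h ⊢
    simp only [VEB.trunc, OTree.children, List.getElem?_map] at h ⊢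
    cases hc : cs[i]? with
    | none => simp [hc] at h
    | some c =>
      simp only [hc, Option.map_some] at h ⊢
      exact ih h (by simpa using hp)

end Tree

section LevelPaths

theorem length_of_mem_levelPaths {m : ℕ} {t : OTree} {q : List ℕ} (h : q ∈ levelPaths m t) :
    q.length = m := by
  induction m generalizing t q with
  | zero => simp_all [levelPaths]
  | succ n ih =>
    simp only [levelPaths, List.mem_flatten, List.mem_map] at h
    obtain ⟨_, ⟨⟨c, i⟩, -, rfl⟩, hq⟩ := h
    obtain ⟨q, hq', rfl⟩ := List.mem_map.1 hq
    simp [ih hq']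

theorem mem_levelPaths {m : ℕ} {t : OTree} {q : List ℕ} (hlen : q.length = m)
    (hq : IsVertex t q) : q ∈ levelPaths m t := by
  induction m generalizing t q with
  | zero => simp_all [levelPaths]
  | succ n ih =>
    obtain _ | ⟨i, q⟩ := q
    · simp at hlen
    unfold IsVertex subtreeAt? at hq
    cases hc : t.children[i]? with
    | none => simp [hc] at hq
    | some c =>
      rw [hc] at hq
      simp only [levelPaths, List.mem_flatten, List.mem_map]
      exact ⟨_, ⟨(c, i), List.mem_zipIdx_iff_getElem?.2 hc, rfl⟩,
        List.mem_map.2 ⟨q, ih (by simpa using hlen) hq, rfl⟩⟩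

theorem pairwise_lt_levelPaths (m : ℕ) (t : OTree) : (levelPaths m t).Pairwise (· < ·) := by
  induction m generalizing t with
  | zero => simp [levelPaths]
  | succ n ih =>
    rw [levelPaths, List.pairwise_flatten, List.pairwise_map]
    refine ⟨fun l hl => ?_, ?_⟩
    · obtain ⟨_, _, rfl⟩ := List.mem_map.1 hl
      exact (ih _).map _ fun _ _ => List.Lex.cons
    · have hidx : t.children.zipIdx.Pairwise (fun a b => a.2 < b.2) := by
        rw [List.pairwise_iff_getElem]
        intro i j _ _ hij
        simpa using hij
      refine hidx.imp fun hlt x hx y hy => ?_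
      obtain ⟨_, _, rfl⟩ := List.mem_map.1 hx
      obtain ⟨_, _, rfl⟩ := List.mem_map.1 hy
      exact List.Lex.rel hlt

theorem levelPaths_eq_split {m : ℕ} {t : OTree} {q : List ℕ} (hq : q ∈ levelPaths m t) :
    ∃ P₁ P₂, levelPaths m t = P₁ ++ q :: P₂ ∧ (∀ p ∈ P₁, p < q) ∧ (∀ p ∈ P₂, q < p) := by
  obtain ⟨P₁, P₂, hsplit⟩ := List.append_of_mem hq
  have hsorted := pairwise_lt_levelPaths m t
  rw [hsplit, List.pairwise_append, List.pairwise_cons] at hsorted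
  exact ⟨P₁, P₂, hsplit, fun p hp => hsorted.2.2 p hp q List.mem_cons_self, hsorted.2.1.1⟩

end LevelPaths

section VanEmdeBoas

variable {ε : ℝ}

theorem cutLevel_lt (hε : ε ≤ 1 / 2) {h : ℕ} (hh : 2 ≤ h) : cutLevel ε h < h := by
  refine max_lt ((Nat.floor_lt' (by omega)).2 ?_) (by omega)
  have : (2 : ℝ) ≤ h := by exact_mod_cast hh
  nlinarith

noncomputable def bottomBlock (ε : ℝ) (fuel : ℕ) (t : OTree) (q : List ℕ) : List (List ℕ) :=
  match subtreeAt? t q with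
  | some s => (vEBAux ε fuel s).map (q ++ ·)
  | none => []

theorem vEBAux_succ_of_one_lt {fuel : ℕ} {t : OTree} (ht : 1 < height t) :
    vEBAux ε (fuel + 1) t =
      vEBAux ε fuel (trunc (cutLevel ε (height t) - 1) t) ++
        ((levelPaths (cutLevel ε (height t)) t).map (bottomBlock ε fuel t)).flatten := by
  rw [vEBAux, if_neg (by omega)]
  rfl

theorem bottomBlock_of_subtreeAt? {fuel : ℕ} {t s : OTree} {q : List ℕ}
    (h : subtreeAt? t q = some s) : bottomBlock ε fuel t q = (vEBAux ε fuel s).map (q ++ ·) := by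
  rw [bottomBlock, h]

theorem exists_of_mem_bottomBlock {fuel : ℕ} {t : OTree} {q x : List ℕ}
    (hx : x ∈ bottomBlock ε fuel t q) :
    ∃ s r, subtreeAt? t q = some s ∧ r ∈ vEBAux ε fuel s ∧ x = q ++ r := by
  unfold bottomBlock at hx
  split at hx
  · obtain ⟨r, hr, rfl⟩ := List.mem_map.1 hx
    exact ⟨_, r, ‹_›, hr, rfl⟩
  · cases hx

theorem exists_of_mem_bottomBlocks {fuel : ℕ} {t : OTree} {P : List (List ℕ)} {x : List ℕ}
    (hx : x ∈ (P.map (bottomBlock ε fuel t)).flatten) : ∃ q ∈ P, ∃ r, x = q ++ r := by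
  obtain ⟨_, hl, hxl⟩ := List.mem_flatten.1 hx
  obtain ⟨q, hq, rfl⟩ := List.mem_map.1 hl
  obtain ⟨_, r, -, -, rfl⟩ := exists_of_mem_bottomBlock hxl
  exact ⟨q, hq, r, rfl⟩

theorem length_lt_of_mem_vEBAux {fuel : ℕ} {t : OTree} {x : List ℕ}
    (hx : x ∈ vEBAux ε fuel t) : x.length < height t := by
  induction fuel generalizing t x with
  | zero => cases hx
  | succ n ih =>
    by_cases h1 : height t ≤ 1
    · rw [vEBAux, if_pos h1, List.mem_singleton] at hx
      simpa [hx] using height_pos t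
    rw [vEBAux_succ_of_one_lt (by omega), List.mem_append] at hx
    rcases hx with hx | hx
    · have := ih hx
      rw [height_trunc] at this
      omega
    · obtain ⟨_, hl, hxl⟩ := List.mem_flatten.1 hx
      obtain ⟨q, hq, rfl⟩ := List.mem_map.1 hl
      obtain ⟨s, r, hs, hr, rfl⟩ := exists_of_mem_bottomBlock hxl
      have := ih hr
      have := height_add_length_le hs
      simp only [List.length_append]
      omega

theorem vEBAux_eq_nil_cons (hε : ε ≤ 1 / 2) {fuel : ℕ} {t : OTree} (hf : height t ≤ fuel) :
    ∃ rest, vEBAux ε fuel t = [] :: rest := by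
  induction fuel generalizing t with
  | zero => exact absurd hf (height_pos t).not_ge
  | succ n ih =>
    by_cases h1 : height t ≤ 1
    · exact ⟨[], by rw [vEBAux, if_pos h1]⟩
    have := cutLevel_lt hε (h := height t) (by omega)
    obtain ⟨rest, hrest⟩ := ih (t := trunc (cutLevel ε (height t) - 1) t)
      (by rw [height_trunc]; omega)
    rw [vEBAux_succ_of_one_lt (by omega), hrest]
    exact ⟨_, rfl⟩

theorem nodup_vEBAux (hε : ε ≤ 1 / 2) {fuel : ℕ} {t : OTree} (hf : height t ≤ fuel) :
    (vEBAux ε fuel t).Nodup := by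
  induction fuel generalizing t with
  | zero => exact absurd hf (height_pos t).not_ge
  | succ n ih =>
    by_cases h1 : height t ≤ 1
    · rw [vEBAux, if_pos h1]
      exact List.nodup_singleton _
    set m := cutLevel ε (height t) with hm
    have hm1 : 1 ≤ m := le_max_right _ _
    have hmh : m < height t := cutLevel_lt hε (by omega)
    have hblock : ∀ q ∈ levelPaths m t, (bottomBlock ε n t q).Nodup := by
      intro q hq
      unfold bottomBlock
      split
      · have := height_add_length_le ‹_›
        have := length_of_mem_levelPaths hq
        exact (ih (by omega)).map (List.append_right_injective q)
      · exact List.nodup_nil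
    have hdisj : ∀ q ∈ levelPaths m t, ∀ q' ∈ levelPaths m t, q ≠ q' →
        (bottomBlock ε n t q).Disjoint (bottomBlock ε n t q') := by
      intro q hq q' hq' hne x hx hx'
      obtain ⟨_, r, -, -, rfl⟩ := exists_of_mem_bottomBlock hx
      obtain ⟨_, r', -, -, heq⟩ := exists_of_mem_bottomBlock hx'
      exact hne (List.append_inj heq (by rw [length_of_mem_levelPaths hq,
        length_of_mem_levelPaths hq'])).1
    rw [vEBAux_succ_of_one_lt (by omega), List.nodup_append, List.nodup_flatten,
      List.pairwise_map]
    refine ⟨ih (by rw [height_trunc]; omega), ⟨?_, ?_⟩, ?_⟩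
    · intro l hl
      obtain ⟨q, hq, rfl⟩ := List.mem_map.1 hl
      exact hblock q hq
    · exact (List.nodup_iff_pairwise_ne.1 (pairwise_lt_levelPaths m t).nodup).imp_of_mem
        fun hq hq' hne => hdisj _ hq _ hq' hne
    · intro x hx y hy rfl
      have := length_lt_of_mem_vEBAux hx
      rw [height_trunc] at this
      obtain ⟨q, hq, r, rfl⟩ := exists_of_mem_bottomBlocks hy
      simp only [List.length_append, length_of_mem_levelPaths hq] at this
      omega

def SeparatedByBranch (ℓ : List ℕ) (L : List (List ℕ)) : Prop :=
  Separates (· <+: ℓ) (LeftOfBranch · ℓ) (RightOfBranch · ℓ) L ∧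
    FollowedBy (· <+: ℓ) (LeftOfBranch · ℓ) L

theorem SeparatedByBranch.of_take {ℓ : List ℕ} {k : ℕ} {L : List (List ℕ)}
    (h : SeparatedByBranch (ℓ.take k) L) (hL : ∀ x ∈ L, x.length ≤ k) :
    SeparatedByBranch ℓ L := by
  have hpre : ∀ z ∈ L, z <+: ℓ.take k → z <+: ℓ := fun _ _ hz => hz.trans (List.take_prefix k ℓ)
  have hsep := h.1.map (mid := (· <+: ℓ)) (left := (LeftOfBranch · ℓ))
    (right := (RightOfBranch · ℓ)) (f := id) (fun x hx => (leftOfBranch_take_iff (hL x hx)).2)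
    (fun y hy => (rightOfBranch_take_iff (hL y hy)).2) hpre
  have hfol := h.2.map (mid := (· <+: ℓ)) (left := (LeftOfBranch · ℓ)) (f := id)
    (fun x hx => (leftOfBranch_take_iff (hL x hx)).2) hpre
  rw [List.map_id] at hsep hfol
  exact ⟨hsep, hfol⟩

theorem SeparatedByBranch.map_append {ℓ : List ℕ} {L : List (List ℕ)}
    (h : SeparatedByBranch ℓ L) (p : List ℕ) :
    SeparatedByBranch (p ++ ℓ) (L.map (p ++ ·)) :=
  ⟨h.1.map (fun _ _ => leftOfBranch_append_iff.1) (fun _ _ => rightOfBranch_append_iff.1)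
      (fun _ _ => (List.prefix_append_right_inj p).2),
    h.2.map (fun _ _ => leftOfBranch_append_iff.1) (fun _ _ => (List.prefix_append_right_inj p).2)⟩

theorem leftOfBranch_of_mem_bottomBlocks {fuel : ℕ} {t : OTree} {P : List (List ℕ)}
    {p ℓ x : List ℕ} (hP : ∀ q ∈ P, q.length = p.length ∧ q < p)
    (hx : x ∈ (P.map (bottomBlock ε fuel t)).flatten) : LeftOfBranch x (p ++ ℓ) := by
  obtain ⟨q, hq, r, rfl⟩ := exists_of_mem_bottomBlocks hx
  exact leftOfBranch_append_of_lt (hP q hq).1 (hP q hq).2 r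

theorem rightOfBranch_of_mem_bottomBlocks {fuel : ℕ} {t : OTree} {P : List (List ℕ)}
    {p ℓ x : List ℕ} (hP : ∀ q ∈ P, q.length = p.length ∧ p < q)
    (hx : x ∈ (P.map (bottomBlock ε fuel t)).flatten) : RightOfBranch x (p ++ ℓ) := by
  obtain ⟨q, hq, r, rfl⟩ := exists_of_mem_bottomBlocks hx
  exact rightOfBranch_append_of_lt (hP q hq).1 (hP q hq).2 r

theorem SeparatedByBranch.vEBAux_succ (hε : ε ≤ 1 / 2) {n : ℕ} {t s : OTree} {p ℓ : List ℕ}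
    (ht : 1 < height t) (hp : p.length = cutLevel ε (height t))
    (hs : subtreeAt? t p = some s) (hsn : height s ≤ n)
    (hT : SeparatedByBranch (p ++ ℓ) (vEBAux ε n (trunc (cutLevel ε (height t) - 1) t)))
    (hQ : SeparatedByBranch ℓ (vEBAux ε n s)) :
    SeparatedByBranch (p ++ ℓ) (vEBAux ε (n + 1) t) := by
  obtain ⟨P₁, P₂, hsplit, hP₁, hP₂⟩ :=
    levelPaths_eq_split (mem_levelPaths hp (Option.isSome_iff_exists.2 ⟨s, hs⟩))
  have hlen : ∀ q ∈ P₁ ++ p :: P₂, q.length = p.length := fun q hq => by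
    rw [← hsplit] at hq
    rw [length_of_mem_levelPaths hq, hp]
  obtain ⟨rest, hrest⟩ := vEBAux_eq_nil_cons hε hsn
  have hQ' := hQ.map_append p
  rw [hrest, List.map_cons, List.append_nil] at hQ'
  rw [vEBAux_succ_of_one_lt ht, hsplit, List.map_append, List.map_cons, List.flatten_append,
    List.flatten_cons, bottomBlock_of_subtreeAt? hs, hrest, List.map_cons, List.append_nil]
  refine separates_of_decomposition hT.1 hT.2 (fun x hx => ?_) hQ'.1 hQ'.2
    (List.prefix_append _ _) (not_rightOfBranch_of_prefix (List.prefix_append _ _))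
    (fun x hx hl => ?_)
  · exact (leftOfBranch_of_mem_bottomBlocks
      (fun q hq => ⟨hlen q (by simp [hq]), hP₁ q hq⟩) hx).not_right
  · exact hl.not_right (rightOfBranch_of_mem_bottomBlocks
      (fun q hq => ⟨hlen q (by simp [hq]), hP₂ q hq⟩) hx)

theorem separatedByBranch_vEBAux (hε : ε ≤ 1 / 2) {fuel : ℕ} {t : OTree} {ℓ : List ℕ}
    (hf : height t ≤ fuel) (hℓ : IsVertex t ℓ) (hdepth : ℓ.length + 1 = height t) :
    SeparatedByBranch ℓ (vEBAux ε fuel t) := by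
  induction fuel generalizing t ℓ with
  | zero => exact absurd hf (height_pos t).not_ge
  | succ n ih =>
    by_cases h1 : height t ≤ 1
    · have hroot : ∀ x ∈ [([] : List ℕ)], ¬ LeftOfBranch x ℓ := by
        simpa using not_leftOfBranch_of_prefix (List.nil_prefix (l := ℓ))
      rw [vEBAux, if_pos h1]
      exact ⟨separates_of_forall_not_left hroot, followedBy_of_forall_not_left hroot⟩
    set m := cutLevel ε (height t)
    have hm1 : 1 ≤ m := le_max_right _ _
    have hmh : m < height t := cutLevel_lt hε (by omega)
    obtain ⟨p, ℓ', rfl, hp⟩ : ∃ p ℓ', ℓ = p ++ ℓ' ∧ p.length = m :=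
      ⟨ℓ.take m, ℓ.drop m, (List.take_append_drop m ℓ).symm, by simp; omega⟩
    obtain ⟨s, hs, hℓ'⟩ : ∃ s, subtreeAt? t p = some s ∧ IsVertex s ℓ' := by
      unfold IsVertex at hℓ
      rw [subtreeAt?_append] at hℓ
      cases h : subtreeAt? t p <;> simp_all [IsVertex]
    have hs_height := height_add_length_le hs
    have hℓ'_depth := hℓ'.length_lt_height
    rw [List.length_append] at hdepth
    have hT := (ih (t := trunc (m - 1) t) (ℓ := (p ++ ℓ').take (m - 1))
      (by rw [height_trunc]; omega) ((hℓ.of_prefix (List.take_prefix _ _)).trunc (by simp))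
      (by simp [height_trunc]; omega)).of_take fun x hx => by
        have := length_lt_of_mem_vEBAux hx
        rw [height_trunc] at this
        omega
    exact hT.vEBAux_succ hε (by omega) hp hs (by omega) (ih (by omega) hℓ' (by omega))

end VanEmdeBoas

/-- If a memory interval `A` is partitioned by a single branch `B`
(disjoint from `A`, given by its leaf `ℓ`) into a nonempty left component and a nonempty
right component, then every vertex of the right component precedes every vertex of the
left component in `vEB_ε(T)`. -/
theorem right_component_before_left
    (ε : ℝ) (hε0 : 0 < ε) (hε1 : ε ≤ 1/2) (t : OTree) (ht : Uniform t)
    (A : Set (List ℕ)) (hA : MemInterval ε t A)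
    (ℓ : List ℕ) (hℓ : IsLeaf t ℓ)
    (hdisj : ∀ p ∈ A, ¬ p <+: ℓ)
    (hleft : ∃ p ∈ A, LeftOfBranch p ℓ)
    (hright : ∃ p ∈ A, RightOfBranch p ℓ)
    (u : List ℕ) (hu : u ∈ A) (hur : RightOfBranch u ℓ)
    (v : List ℕ) (hv : v ∈ A) (hvl : LeftOfBranch v ℓ) :
    pos ε t u < pos ε t v := by
  obtain ⟨i, n, rfl⟩ := hA
  have hnodup : (vEB ε t).Nodup := nodup_vEBAux hε1 le_rfl
  have hsep := (separatedByBranch_vEBAux hε1 le_rfl (Option.isSome_iff_exists.2 ⟨_, hℓ⟩)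
    (ht ℓ hℓ)).1
  have hI : ((vEB ε t).drop i).take n <:+: vEB ε t :=
    (List.take_prefix n _).isInfix.trans (List.drop_suffix i _).isInfix
  rcases List.pair_sublist_or_pair_sublist hu hv (fun h => hvl.not_right (h ▸ hur)) with huv | hvu
  · exact List.idxOf_lt_idxOf_of_pair_sublist hnodup (huv.trans hI.sublist)
  · obtain ⟨z, hz, hvzu⟩ := hsep v u (hvu.trans hI.sublist) hvl hur
    exact absurd hz (hdisj z (hnodup.mem_of_sublist_of_isInfix hI hv hu hvzu))

end VEB
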